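/- arXiv:1304.6792 — 7 statements merged into one kernel-verified Lean document; each statement's English description precedes it below -/
import Mathlib

section
/- If f: (0,∞) → [0,∞) is convex, then its *-adjoint f*(t) = t·f(1/t) is also convex on (0,∞). -/
open Set

/-- If `f : (0,∞) → [0,∞)` is convex, then its *-adjoint `f*(t) = t·f(1/t)`
is also convex on `(0,∞)`. -/
theorem star_adjoint_convexOn (f : ℝ → ℝ)
    (hf0 : ∀ t ∈ Set.Ioi (0:ℝ), 0 ≤ f t)
    (hf : ConvexOn ℝ (Set.Ioi (0:ℝ)) f) :
    ConvexOn ℝ (Set.Ioi (0:ℝ)) (fun t => t * f (1 / t)) := by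
  refine ⟨convex_Ioi 0, ?_⟩
  intro x hx y hy a b ha hb hab
  have hx' : (0:ℝ) < x := hx
  have hy' : (0:ℝ) < y := hy
  have hz : (0:ℝ) < a * x + b * y := by
    have := (convex_Ioi (0:ℝ)) hx hy ha hb hab
    simpa [smul_eq_mul] using this
  set z := a * x + b * y with hzdef
  have hax : 0 ≤ a * x / z := by positivity
  have hby : 0 ≤ b * y / z := by positivity
  have hsum : a * x / z + b * y / z = 1 := by
    field_simp
    exact hzdef.symm
  have key := hf.2 (mem_Ioi.2 (one_div_pos.2 hx')) (mem_Ioi.2 (one_div_pos.2 hy'))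
    hax hby hsum
  have hcomb : (a * x / z) • (1 / x) + (b * y / z) • (1 / y) = 1 / z := by
    have hb' : b = 1 - a := by linarith
    subst hb'
    simp only [smul_eq_mul]
    field_simp
    ring
  rw [hcomb] at key
  have := mul_le_mul_of_nonneg_left key hz.le
  simp only [smul_eq_mul]
  calc z * f (1 / z) ≤ z * (a * x / z * f (1 / x) + b * y / z * f (1 / y)) := this
    _ = a * (x * f (1 / x)) + b * (y * f (1 / y)) := by field_simp
end

section
/- If f: (0,∞) → [0,∞) is concave, then for every exponent α ∈ (0,1] the function F(x,y) = (y·f(x/y))^α is concave on (0,∞) × (0,∞). -/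
open Set

lemma concave_perspective_aux (f : ℝ → ℝ)
    (hf : ConcaveOn ℝ (Set.Ioi (0:ℝ)) f) :
    ConcaveOn ℝ ((Set.Ioi (0:ℝ)) ×ˢ (Set.Ioi (0:ℝ)))
      (fun xy : ℝ × ℝ => xy.2 * f (xy.1 / xy.2)) := by
  constructor
  · exact (convex_Ioi 0).prod (convex_Ioi 0)
  · rintro ⟨x1, y1⟩ ⟨hx1, hy1⟩ ⟨x2, y2⟩ ⟨hx2, hy2⟩ a b ha hb hab
    simp only [Set.mem_Ioi] at hx1 hy1 hx2 hy2
    rcases ha.eq_or_lt with rfl | ha'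
    · simp only [zero_add] at hab; subst hab; simp
    rcases hb.eq_or_lt with rfl | hb'
    · simp only [add_zero] at hab; subst hab; simp
    have hy : 0 < a * y1 + b * y2 := by positivity
    have key := hf.2 (Set.mem_Ioi.mpr (div_pos hx1 hy1))
      (Set.mem_Ioi.mpr (div_pos hx2 hy2))
      (show (0:ℝ) ≤ a * y1 / (a * y1 + b * y2) by positivity)
      (show (0:ℝ) ≤ b * y2 / (a * y1 + b * y2) by positivity)
      (show a * y1 / (a * y1 + b * y2) + b * y2 / (a * y1 + b * y2) = 1 by field_simp)
    have harg : a * y1 / (a * y1 + b * y2) * (x1 / y1)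
        + b * y2 / (a * y1 + b * y2) * (x2 / y2)
        = (a * x1 + b * x2) / (a * y1 + b * y2) := by
      field_simp
    simp only [smul_eq_mul] at key
    rw [harg] at key
    simp only [smul_eq_mul, Prod.smul_mk, Prod.mk_add_mk, Prod.fst, Prod.snd]
    have := mul_le_mul_of_nonneg_left key hy.le
    calc a * (y1 * f (x1 / y1)) + b * (y2 * f (x2 / y2))
        = (a * y1 + b * y2) * (a * y1 / (a * y1 + b * y2) * f (x1 / y1)
          + b * y2 / (a * y1 + b * y2) * f (x2 / y2)) := by field_simp
      _ ≤ (a * y1 + b * y2) * f ((a * x1 + b * x2) / (a * y1 + b * y2)) := this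

/-- If `f : (0,∞) → [0,∞)` is concave, then for every `α ∈ (0,1]` the function
`F(x,y) = (y·f(x/y))^α` is concave on `(0,∞) × (0,∞)`. -/
theorem concave_perspective_rpow (f : ℝ → ℝ)
    (hf0 : ∀ t ∈ Set.Ioi (0:ℝ), 0 ≤ f t)
    (hf : ConcaveOn ℝ (Set.Ioi (0:ℝ)) f)
    (α : ℝ) (hα : α ∈ Set.Ioc (0:ℝ) 1) :
    ConcaveOn ℝ ((Set.Ioi (0:ℝ)) ×ˢ (Set.Ioi (0:ℝ)))
      (fun xy : ℝ × ℝ => (xy.2 * f (xy.1 / xy.2)) ^ α) := by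
  obtain ⟨hα0, hα1⟩ := hα
  have hg := concave_perspective_aux f hf
  have hrpow := Real.concaveOn_rpow hα0.le hα1
  constructor
  · exact (convex_Ioi 0).prod (convex_Ioi 0)
  · intro p hp q hq a b ha hb hab
    have hgp : 0 ≤ p.2 * f (p.1 / p.2) := by
      have := hf0 (p.1 / p.2) (Set.mem_Ioi.mpr (div_pos hp.1 hp.2))
      exact mul_nonneg (le_of_lt hp.2) this
    have hgq : 0 ≤ q.2 * f (q.1 / q.2) := by
      have := hf0 (q.1 / q.2) (Set.mem_Ioi.mpr (div_pos hq.1 hq.2))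
      exact mul_nonneg (le_of_lt hq.2) this
    have hmem : a • p + b • q ∈ (Set.Ioi (0:ℝ)) ×ˢ (Set.Ioi (0:ℝ)) :=
      hg.1 hp hq ha hb hab
    have h1 := hg.2 hp hq ha hb hab
    have hcomb : 0 ≤ a * (p.2 * f (p.1 / p.2)) + b * (q.2 * f (q.1 / q.2)) := by
      positivity
    have h2 : (a * (p.2 * f (p.1 / p.2)) + b * (q.2 * f (q.1 / q.2))) ^ α
        ≤ ((a • p + b • q).2 * f ((a • p + b • q).1 / (a • p + b • q).2)) ^ α :=
      Real.rpow_le_rpow hcomb (by simpa using h1) hα0.le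
    have h3 := hrpow.2 (Set.mem_Ici.mpr hgp) (Set.mem_Ici.mpr hgq) ha hb hab
    simp only [smul_eq_mul] at h3 ⊢
    exact h3.trans h2
end

section
/- Alexandrov–Fenchel type inequality for mixed f-divergences: for probability densities p_i, q_i (1 ≤ i ≤ n) on a finite measure space and nonnegative functions f_i on (0,∞), and for any 1 ≤ m ≤ n, one has [D_{f⃗}(P⃗,Q⃗)]^m ≤ ∏_{k=n-m+1}^{n} D_{f⃗^{n,k}}(P⃗^{n,k}, Q⃗^{n,k}), where the superscript (n,k) denotes replacing the last m entries of the vector by m copies of the k-th entry. -/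
open MeasureTheory Finset
open scoped ENNReal

/-- Alexandrov–Fenchel type inequality for the mixed f-divergence:
for `1 ≤ m ≤ n`, `[D_{f⃗}(P⃗,Q⃗)]^m ≤ ∏_{k=n-m+1}^{n} D_{f⃗^{n,k}}(P⃗^{n,k},Q⃗^{n,k})`,
where the superscript `(n,k)` replaces the last `m` entries of the vector by `m`
copies of the `k`-th entry. -/
theorem mixed_f_divergence_alexandrov_fenchel
    {X : Type*} [MeasurableSpace X] (μ : Measure X) [IsFiniteMeasure μ]
    (n : ℕ) (f : Fin n → ℝ → ℝ) (p q : Fin n → X → ℝ)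
    (hpm : ∀ i, Measurable (p i)) (hqm : ∀ i, Measurable (q i))
    (hfm : ∀ i, Measurable (f i))
    (hp0 : ∀ i x, 0 ≤ p i x) (hq0 : ∀ i x, 0 ≤ q i x)
    (hp1 : ∀ i, ∫ x, p i x ∂μ = 1) (hq1 : ∀ i, ∫ x, q i x ∂μ = 1)
    (hf0 : ∀ i, ∀ t ∈ Set.Ioi (0:ℝ), 0 ≤ f i t)
    (m : ℕ) (hm1 : 1 ≤ m) (hmn : m ≤ n)
    (hint : ∀ k : Fin n, n - m ≤ k.val →
      Integrable (fun x => ∏ i : Fin n,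
        (if i.val < n - m then f i (p i x / q i x) * q i x
          else f k (p k x / q k x) * q k x) ^ ((1:ℝ)/n)) μ) :
    (∫ x, ∏ i : Fin n, (f i (p i x / q i x) * q i x) ^ ((1:ℝ)/n) ∂μ) ^ m
      ≤ ∏ k ∈ Finset.univ.filter (fun k : Fin n => n - m ≤ k.val),
          ∫ x, ∏ i : Fin n,
            (if i.val < n - m then f i (p i x / q i x) * q i x
              else f k (p k x / q k x) * q k x) ^ ((1:ℝ)/n) ∂μ := by
  classical
  rcases Nat.lt_or_ge n 2 with hn | hn
  · -- degenerate case n = 1 (n = 0 impossible): equality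
    interval_cases n
    · omega
    · interval_cases m
      have hfil : (Finset.univ.filter (fun k : Fin 1 => 1 - 1 ≤ k.val)) = Finset.univ := by
        apply Finset.filter_true_of_mem; intro k _; omega
      rw [hfil]
      simp only [Fin.prod_univ_one, pow_one]
      apply le_of_eq
      congr 1
  -- main case n ≥ 2
  have hn0 : (0:ℝ) < (n:ℝ) := by positivity
  set g : Fin n → X → ℝ := fun i x => f i (p i x / q i x) * q i x with hgdef
  have hgm : ∀ i, Measurable (g i) :=
    fun i => ((hfm i).comp ((hpm i).div (hqm i))).mul (hqm i)
  -- nonnegativity of `t ^ (1/n)` for every real t when n ≥ 2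
  have hrpow0 : ∀ t : ℝ, 0 ≤ t ^ ((1:ℝ)/n) := by
    intro t
    rcases le_or_gt 0 t with h | h
    · exact Real.rpow_nonneg h _
    · rw [Real.rpow_def_of_neg h]
      refine mul_nonneg (Real.exp_nonneg _) (Real.cos_nonneg_of_mem_Icc ⟨?_, ?_⟩)
      · have : (0:ℝ) ≤ (1/n) * Real.pi := by positivity
        linarith [Real.pi_pos]
      · have h2 : (1:ℝ)/n ≤ 1/2 := by
          apply one_div_le_one_div_of_le <;> [norm_num; exact_mod_cast hn]
        calc (1:ℝ)/n * Real.pi ≤ 1/2 * Real.pi :=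
              mul_le_mul_of_nonneg_right h2 Real.pi_pos.le
          _ = Real.pi / 2 := by ring
  set a : Fin n → X → ℝ := fun i x => g i x ^ ((1:ℝ)/n) with hadef
  have ha0 : ∀ i x, 0 ≤ a i x := fun i x => hrpow0 _
  have ham : ∀ i, Measurable (a i) := fun i =>
    (Real.continuous_rpow_const (by positivity)).measurable.comp (hgm i)
  -- the big integrands
  set B : Fin n → X → ℝ := fun k x => ∏ i : Fin n,
      (if i.val < n - m then g i x else g k x) ^ ((1:ℝ)/n) with hBdef
  have hBalt : ∀ k x, B k x = ∏ i : Fin n, (if i.val < n - m then a i x else a k x) := by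
    intro k x
    refine Finset.prod_congr rfl fun i _ => ?_
    by_cases h : i.val < n - m <;> simp [h, hadef]
  have hB0 : ∀ k x, 0 ≤ B k x := by
    intro k x
    rw [hBalt]
    exact Finset.prod_nonneg fun i _ => by by_cases h : i.val < n - m <;>
      simp [h, ha0]
  have hBm : ∀ k, Measurable (B k) := by
    intro k
    apply Finset.measurable_prod
    intro i _
    by_cases h : i.val < n - m <;>
      simp only [h, if_true, if_false] <;>
      exact (Real.continuous_rpow_const (by positivity)).measurable.comp (hgm _)
  -- index set and cardinalities
  set S : Finset (Fin n) := Finset.univ.filter (fun k : Fin n => n - m ≤ k.val) with hSdef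
  have hnm : n - m < n := by omega
  have hSeq : S = Finset.Ici (⟨n - m, hnm⟩ : Fin n) := by
    ext k; simp [hSdef, Fin.le_def]
  have hScard : S.card = m := by
    rw [hSeq, Fin.card_Ici]; simp only [Fin.val_mk]; omega
  -- decomposition of B k
  set P : X → ℝ := fun x => ∏ i ∈ Finset.univ.filter (fun i : Fin n => i.val < n - m), a i x
    with hPdef
  have hP0 : ∀ x, 0 ≤ P x := fun x => Finset.prod_nonneg fun i _ => ha0 i x
  have hBsplit : ∀ k x, B k x = P x * a k x ^ m := by
    intro k x
    rw [hBalt]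
    rw [← Finset.prod_filter_mul_prod_filter_not Finset.univ (fun i : Fin n => i.val < n - m)]
    congr 1
    · exact Finset.prod_congr rfl fun i hi => by
        simp only [Finset.mem_filter] at hi; simp [hi.2]
    · have hcard : (Finset.univ.filter (fun i : Fin n => ¬ i.val < n - m)).card = m := by
        have : (Finset.univ.filter (fun i : Fin n => ¬ i.val < n - m)) = S := by
          ext i; simp [hSdef, not_lt]
        rw [this, hScard]
      rw [Finset.prod_congr rfl (fun i hi => ?_), Finset.prod_const, hcard]
      simp only [Finset.mem_filter] at hi; simp [hi.2]
  -- pointwise identity:  A = ∏_{k ∈ S} (B k) ^ (1/m)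
  have hm0 : ((m:ℝ)) ≠ 0 := by positivity
  have hApt : ∀ x, (∏ i : Fin n, (g i x) ^ ((1:ℝ)/n))
      = ∏ k ∈ S, (B k x) ^ ((1:ℝ)/m) := by
    intro x
    have h1 : ∀ k, (B k x) ^ ((1:ℝ)/m) = P x ^ ((1:ℝ)/m) * a k x := by
      intro k
      rw [hBsplit, Real.mul_rpow (hP0 x) (pow_nonneg (ha0 k x) m),
        ← Real.rpow_natCast (a k x) m, ← Real.rpow_mul (ha0 k x)]
      rw [show ((m:ℝ) * ((1:ℝ)/m)) = 1 by field_simp, Real.rpow_one]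
    calc ∏ i : Fin n, (g i x) ^ ((1:ℝ)/n)
        = P x * ∏ k ∈ S, a k x := by
          rw [← Finset.prod_filter_mul_prod_filter_not Finset.univ
            (fun i : Fin n => i.val < n - m)]
          congr 1
          apply Finset.prod_congr
          · ext i; simp [hSdef, not_lt]
          · intro i _; rfl
      _ = ∏ k ∈ S, (B k x) ^ ((1:ℝ)/m) := by
          rw [Finset.prod_congr rfl (fun k _ => h1 k), Finset.prod_mul_distrib,
            Finset.prod_const, hScard, ← Real.rpow_natCast (P x ^ ((1:ℝ)/m)) m,
            ← Real.rpow_mul (hP0 x)]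
          rw [show ((1:ℝ)/m * m) = 1 by field_simp, Real.rpow_one]
  -- move to lintegrals
  set BE : Fin n → X → ℝ≥0∞ := fun k x => ENNReal.ofReal (B k x) with hBEdef
  have hBEm : ∀ k, Measurable (BE k) := fun k => (hBm k).ennreal_ofReal
  have hBEfin : ∀ k ∈ S, ∫⁻ x, BE k x ∂μ ≠ ⊤ := by
    intro k hk
    have hkk : n - m ≤ k.val := by simpa [hSdef] using hk
    have := (hint k hkk).hasFiniteIntegral
    rw [hasFiniteIntegral_iff_ofReal (Filter.Eventually.of_forall (hB0 k))] at this
    exact this.ne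
  have hBint : ∀ k ∈ S, (∫ x, B k x ∂μ) = (∫⁻ x, BE k x ∂μ).toReal := by
    intro k hk
    exact integral_eq_lintegral_of_nonneg_ae (Filter.Eventually.of_forall (hB0 k))
      (hBm k).aestronglyMeasurable
  -- Hölder inequality in ℝ≥0∞
  have hsum : ∑ _k ∈ S, (1:ℝ)/m = 1 := by
    rw [Finset.sum_const, hScard, nsmul_eq_mul]; field_simp
  have holder : ∫⁻ x, ∏ k ∈ S, (BE k x) ^ ((1:ℝ)/m) ∂μ
      ≤ ∏ k ∈ S, (∫⁻ x, BE k x ∂μ) ^ ((1:ℝ)/m) :=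
    ENNReal.lintegral_prod_norm_pow_le S (fun k _ => (hBEm k).aemeasurable) hsum
      (fun k _ => by positivity)
  -- rewrite the LHS integral
  have hA0 : ∀ x, 0 ≤ ∏ i : Fin n, (g i x) ^ ((1:ℝ)/n) :=
    fun x => Finset.prod_nonneg fun i _ => hrpow0 _
  have hAm : Measurable (fun x => ∏ i : Fin n, (g i x) ^ ((1:ℝ)/n)) := by
    apply Finset.measurable_prod
    intro i _
    exact (Real.continuous_rpow_const (by positivity)).measurable.comp (hgm i)
  have hLHS : (∫ x, ∏ i : Fin n, (g i x) ^ ((1:ℝ)/n) ∂μ)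
      = (∫⁻ x, ∏ k ∈ S, (BE k x) ^ ((1:ℝ)/m) ∂μ).toReal := by
    rw [integral_eq_lintegral_of_nonneg_ae (Filter.Eventually.of_forall hA0)
      hAm.aestronglyMeasurable]
    congr 1
    apply lintegral_congr
    intro x
    rw [hApt x, ENNReal.ofReal_prod_of_nonneg (fun k _ => Real.rpow_nonneg (hB0 k x) _)]
    exact Finset.prod_congr rfl fun k _ =>
      (ENNReal.ofReal_rpow_of_nonneg (hB0 k x)
        (by positivity : (0:ℝ) ≤ 1/(m:ℝ))).symm
  -- put everything together
  have hprodfin : (∏ k ∈ S, (∫⁻ x, BE k x ∂μ) ^ ((1:ℝ)/m)) ≠ ⊤ := by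
    rw [← lt_top_iff_ne_top]
    apply ENNReal.prod_lt_top
    intro k hk
    exact ENNReal.rpow_lt_top_of_nonneg (by positivity) (hBEfin k hk)
  have key : (∫ x, ∏ i : Fin n, (g i x) ^ ((1:ℝ)/n) ∂μ)
      ≤ ∏ k ∈ S, (∫ x, B k x ∂μ) ^ ((1:ℝ)/m) := by
    rw [hLHS]
    calc (∫⁻ x, ∏ k ∈ S, (BE k x) ^ ((1:ℝ)/m) ∂μ).toReal
        ≤ (∏ k ∈ S, (∫⁻ x, BE k x ∂μ) ^ ((1:ℝ)/m)).toReal :=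
          ENNReal.toReal_mono hprodfin holder
      _ = ∏ k ∈ S, ((∫⁻ x, BE k x ∂μ) ^ ((1:ℝ)/m)).toReal := by
          rw [ENNReal.toReal_prod]
      _ = ∏ k ∈ S, (∫ x, B k x ∂μ) ^ ((1:ℝ)/m) := by
          refine Finset.prod_congr rfl fun k hk => ?_
          rw [hBint k hk, ENNReal.toReal_rpow]
  have hLHS0 : 0 ≤ (∫ x, ∏ i : Fin n, (g i x) ^ ((1:ℝ)/n) ∂μ) :=
    integral_nonneg hA0
  have hBint0 : ∀ k ∈ S, 0 ≤ ∫ x, B k x ∂μ :=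
    fun k _ => integral_nonneg (hB0 k)
  calc (∫ x, ∏ i : Fin n, (g i x) ^ ((1:ℝ)/n) ∂μ) ^ m
      ≤ (∏ k ∈ S, (∫ x, B k x ∂μ) ^ ((1:ℝ)/m)) ^ m :=
        pow_le_pow_left₀ hLHS0 key m
    _ = ∏ k ∈ S, ((∫ x, B k x ∂μ) ^ ((1:ℝ)/m)) ^ m := by rw [Finset.prod_pow]
    _ = ∏ k ∈ S, (∫ x, B k x ∂μ) := by
        refine Finset.prod_congr rfl fun k hk => ?_
        rw [← Real.rpow_natCast ((∫ x, B k x ∂μ) ^ ((1:ℝ)/m)) m,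
          ← Real.rpow_mul (hBint0 k hk)]
        rw [show ((1:ℝ)/m * m) = 1 by field_simp, Real.rpow_one]
end

section
/- If f: (0,∞) → [0,∞) is strictly convex and p, q are probability densities with ∫_X f(p/q)·q dμ = f(1), then p = q μ-almost everywhere. -/
open MeasureTheory

lemma exists_subgrad {f : ℝ → ℝ} (hf : StrictConvexOn ℝ (Set.Ioi 0) f) :
    ∃ c : ℝ, ∀ t ∈ Set.Ioi (0:ℝ), f 1 + c * (t - 1) ≤ f t ∧ (t ≠ 1 → f 1 + c * (t - 1) < f t) := by
  have hconv := hf.convexOn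
  have h1 : (1:ℝ) ∈ Set.Ioi (0:ℝ) := by norm_num
  set S : Set ℝ := (fun v => (f v - f 1) / (v - 1)) '' Set.Ioi 1 with hS
  have hSne : S.Nonempty := ⟨_, ⟨2, by norm_num, rfl⟩⟩
  have hbdd : BddBelow S := by
    refine ⟨(f 1 - f (1/2)) / (1 - 1/2), ?_⟩
    rintro x ⟨v, hv, rfl⟩
    have hv1 : 1 < v := hv
    exact hconv.slope_mono_adjacent (by norm_num) (Set.mem_Ioi.2 (by linarith)) (by norm_num) hv1
  set c := sInf S with hc
  have hweak : ∀ t ∈ Set.Ioi (0:ℝ), f 1 + c * (t - 1) ≤ f t := by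
    intro t ht
    simp only [Set.mem_Ioi] at ht
    rcases lt_trichotomy t 1 with h | h | h
    · have hle : (f 1 - f t) / (1 - t) ≤ c := by
        apply le_csInf hSne
        rintro x ⟨v, hv, rfl⟩
        simp only [Set.mem_Ioi] at hv
        exact hconv.slope_mono_adjacent (Set.mem_Ioi.2 ht) (Set.mem_Ioi.2 (by linarith)) h hv
      have h1t : (0:ℝ) < 1 - t := by linarith
      rw [div_le_iff₀ h1t] at hle
      nlinarith
    · simp [h]
    · have hle : c ≤ (f t - f 1) / (t - 1) := csInf_le hbdd ⟨t, Set.mem_Ioi.2 h, rfl⟩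
      have ht1 : (0:ℝ) < t - 1 := by linarith
      rw [le_div_iff₀ ht1] at hle
      linarith
  refine ⟨c, fun t ht => ⟨hweak t ht, fun hne => ?_⟩⟩
  rcases lt_or_eq_of_le (hweak t ht) with h | h
  · exact h
  exfalso
  simp only [Set.mem_Ioi] at ht
  set m := (1 + t) / 2 with hm
  have hm0 : m ∈ Set.Ioi (0:ℝ) := by simp [hm]; linarith
  have hstrict : f m < (1/2 : ℝ) * f 1 + (1/2 : ℝ) * f t := by
    have h2 := hf.2 h1 (Set.mem_Ioi.2 ht) (Ne.symm hne) (by norm_num : (0:ℝ) < 1/2)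
      (by norm_num : (0:ℝ) < 1/2) (by norm_num)
    rw [smul_eq_mul, smul_eq_mul, smul_eq_mul, smul_eq_mul] at h2
    have hmeq : (1/2:ℝ) * 1 + (1/2:ℝ) * t = m := by rw [hm]; ring
    rwa [hmeq] at h2
  have hwm := hweak m hm0
  have : f 1 + c * (m - 1) = (1/2:ℝ) * f 1 + (1/2:ℝ) * (f 1 + c * (t - 1)) := by
    rw [hm]; ring
  rw [← h] at hstrict
  linarith [hwm, hstrict, this]

/-- If `f : (0,∞) → [0,∞)` is strictly convex and `p, q` are probability densities
with `∫ f(p/q)·q dμ = f(1)`, then `p = q` μ-almost everywhere. -/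
theorem f_divergence_eq_f_one_imp_eq
    {X : Type*} [MeasurableSpace X] (μ : Measure X) [IsFiniteMeasure μ]
    (f : ℝ → ℝ) (p q : X → ℝ)
    (hf0 : ∀ t ∈ Set.Ioi (0:ℝ), 0 ≤ f t)
    (hf : StrictConvexOn ℝ (Set.Ioi (0:ℝ)) f)
    (hpm : Measurable p) (hqm : Measurable q)
    (hp0 : ∀ x, 0 ≤ p x) (hq0 : ∀ x, 0 ≤ q x)
    (hp1 : ∫ x, p x ∂μ = 1) (hq1 : ∫ x, q x ∂μ = 1)
    (hpne : ∀ᵐ x ∂μ, p x ≠ 0) (hqne : ∀ᵐ x ∂μ, q x ≠ 0)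
    (hint : Integrable (fun x => f (p x / q x) * q x) μ)
    (heq : ∫ x, f (p x / q x) * q x ∂μ = f 1) :
    p =ᵐ[μ] q := by
  obtain ⟨c, hc⟩ := exists_subgrad hf
  have hpint : Integrable p μ := by
    by_contra h; rw [integral_undef h] at hp1; norm_num at hp1
  have hqint : Integrable q μ := by
    by_contra h; rw [integral_undef h] at hq1; norm_num at hq1
  set g : X → ℝ := fun x => f 1 * q x + c * (p x - q x) with hg
  have hgint : Integrable g μ :=
    (hqint.const_mul (f 1)).add ((hpint.sub hqint).const_mul c)
  have hi1 : Integrable (fun x => f 1 * q x) μ := hqint.const_mul _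
  have hi2 : Integrable (fun x => c * (p x - q x)) μ := by
    exact (hpint.sub hqint).const_mul c
  have hgeq : ∫ x, g x ∂μ = f 1 := by
    have : ∫ x, g x ∂μ = ∫ x, (f 1 * q x + c * (p x - q x)) ∂μ := rfl
    rw [this, integral_add hi1 hi2, integral_const_mul, integral_const_mul,
      integral_sub hpint hqint, hp1, hq1]
    ring
  have hle : ∀ᵐ x ∂μ, g x ≤ f (p x / q x) * q x := by
    filter_upwards [hpne, hqne] with x hpx hqx
    have hpx' : 0 < p x := lt_of_le_of_ne (hp0 x) (Ne.symm hpx)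
    have hqx' : 0 < q x := lt_of_le_of_ne (hq0 x) (Ne.symm hqx)
    have ht : p x / q x ∈ Set.Ioi (0:ℝ) := Set.mem_Ioi.2 (div_pos hpx' hqx')
    have h1 := (hc _ ht).1
    have h2 : (f 1 + c * (p x / q x - 1)) * q x ≤ f (p x / q x) * q x :=
      mul_le_mul_of_nonneg_right h1 (hq0 x)
    have h4 : p x / q x * q x = p x := div_mul_cancel₀ _ hqx
    have h3 : (f 1 + c * (p x / q x - 1)) * q x = g x := by
      rw [hg]; linear_combination c * h4
    linarith [h2, h3.symm.le, h3.le]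
  have hintsub : Integrable (fun x => f (p x / q x) * q x - g x) μ := by
    exact hint.sub hgint
  have hval : ∫ x, (f (p x / q x) * q x - g x) ∂μ = 0 := by
    rw [integral_sub hint hgint, heq, hgeq, sub_self]
  have hzero : (fun x => f (p x / q x) * q x - g x) =ᵐ[μ] 0 :=
    (integral_eq_zero_iff_of_nonneg_ae
      (by filter_upwards [hle] with x hx; simpa [Pi.zero_apply] using sub_nonneg.2 hx)
      hintsub).mp hval
  filter_upwards [hzero, hpne, hqne] with x hx hpx hqx
  have hpx' : 0 < p x := lt_of_le_of_ne (hp0 x) (Ne.symm hpx)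
  have hqx' : 0 < q x := lt_of_le_of_ne (hq0 x) (Ne.symm hqx)
  have ht : p x / q x ∈ Set.Ioi (0:ℝ) := Set.mem_Ioi.2 (div_pos hpx' hqx')
  simp only [Pi.zero_apply] at hx
  have heqx : f (p x / q x) * q x = g x := by linarith
  have h4 : p x / q x * q x = p x := div_mul_cancel₀ _ hqx
  have h3 : (f 1 + c * (p x / q x - 1)) * q x = g x := by
    rw [hg]; linear_combination c * h4
  have heqf : f (p x / q x) = f 1 + c * (p x / q x - 1) := by
    have := heqx.trans h3.symm
    exact mul_right_cancel₀ (ne_of_gt hqx') this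
  by_contra hne
  have htne : p x / q x ≠ 1 := by
    intro h; apply hne; field_simp at h; linarith
  exact absurd heqf (ne_of_gt ((hc _ ht).2 htne))
end

section
/- Isoperimetric type inequality for the mixed f-divergence: if all f_i: (0,∞) → [0,∞) are concave, then [D_{f⃗}(P⃗,Q⃗)]^n ≤ ∏_{i=1}^n D_{f_i}(P_i,Q_i) ≤ ∏_{i=1}^n f_i(1). -/
open MeasureTheory Finset

/-- A concave function on `(0, ∞)` admits a supporting line at `1`. -/
lemma concave_supporting_line {f : ℝ → ℝ} (hf : ConcaveOn ℝ (Set.Ioi (0:ℝ)) f) :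
    ∃ c : ℝ, ∀ t ∈ Set.Ioi (0:ℝ), f t ≤ f 1 + c * (t - 1) := by
  set S : Set ℝ := (fun t => (f t - f 1) / (t - 1)) '' Set.Ioi 1 with hS
  have hne : S.Nonempty := ⟨_, ⟨2, by norm_num, rfl⟩⟩
  have hbdd : BddAbove S := by
    refine ⟨(f 1 - f (1/2)) / (1 - 1/2), ?_⟩
    rintro _ ⟨t, ht, rfl⟩
    exact hf.slope_anti_adjacent (by norm_num) (Set.mem_Ioi.mpr (lt_trans one_pos (Set.mem_Ioi.mp ht)))
      (by norm_num) ht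
  refine ⟨sSup S, fun t ht => ?_⟩
  rcases lt_trichotomy t 1 with h1 | h1 | h1
  · have hle : sSup S ≤ (f t - f 1) / (t - 1) := by
      apply csSup_le hne
      rintro _ ⟨s, hs, rfl⟩
      have := hf.slope_anti_adjacent ht (Set.mem_Ioi.mpr (lt_trans one_pos (Set.mem_Ioi.mp hs))) h1 hs
      calc (f s - f 1) / (s - 1) ≤ (f 1 - f t) / (1 - t) := this
        _ = (f t - f 1) / (t - 1) := by rw [← neg_div_neg_eq]; ring_nf
    have htn : t - 1 < 0 := by linarith
    have := (le_div_iff_of_neg htn).mp hle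
    linarith
  · subst h1; simp
  · have hle : (f t - f 1) / (t - 1) ≤ sSup S := le_csSup hbdd ⟨t, h1, rfl⟩
    have htn : (0:ℝ) < t - 1 := by linarith
    have := (div_le_iff₀ htn).mp hle
    linarith

/-- Isoperimetric type inequality for the mixed f-divergence: if all
`fᵢ : (0,∞) → [0,∞)` are concave, then
`[D_{f⃗}(P⃗,Q⃗)]^n ≤ ∏ᵢ D_{fᵢ}(Pᵢ,Qᵢ) ≤ ∏ᵢ fᵢ(1)`. -/
theorem mixed_f_divergence_isoperimetric
    {X : Type*} [MeasurableSpace X] (μ : Measure X) [IsFiniteMeasure μ]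
    (n : ℕ) (f : Fin n → ℝ → ℝ) (p q : Fin n → X → ℝ)
    (hpm : ∀ i, Measurable (p i)) (hqm : ∀ i, Measurable (q i))
    (hfm : ∀ i, Measurable (f i))
    (hp0 : ∀ i x, 0 ≤ p i x) (hq0 : ∀ i x, 0 ≤ q i x)
    (hp1 : ∀ i, ∫ x, p i x ∂μ = 1) (hq1 : ∀ i, ∫ x, q i x ∂μ = 1)
    (hpne : ∀ i, ∀ᵐ x ∂μ, p i x ≠ 0) (hqne : ∀ i, ∀ᵐ x ∂μ, q i x ≠ 0)
    (hf0 : ∀ i, ∀ t ∈ Set.Ioi (0:ℝ), 0 ≤ f i t)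
    (hf : ∀ i, ConcaveOn ℝ (Set.Ioi (0:ℝ)) (f i))
    (hint : ∀ i, Integrable (fun x => f i (p i x / q i x) * q i x) μ) :
    (∫ x, ∏ i : Fin n, (f i (p i x / q i x) * q i x) ^ ((1:ℝ)/n) ∂μ) ^ n
        ≤ ∏ i : Fin n, ∫ x, f i (p i x / q i x) * q i x ∂μ ∧
      (∏ i : Fin n, ∫ x, f i (p i x / q i x) * q i x ∂μ) ≤ ∏ i : Fin n, f i 1 := by
  classical
  set g : Fin n → X → ℝ := fun i x => f i (p i x / q i x) * q i x with hgdef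
  have hgmeas : ∀ i, Measurable (g i) :=
    fun i => ((hfm i).comp ((hpm i).div (hqm i))).mul (hqm i)
  have hgae : ∀ i, ∀ᵐ x ∂μ, 0 ≤ g i x := by
    intro i
    filter_upwards [hpne i, hqne i] with x hpx hqx
    have hq' : 0 < q i x := (hq0 i x).lt_of_ne (Ne.symm hqx)
    have hp' : 0 < p i x := (hp0 i x).lt_of_ne (Ne.symm hpx)
    exact mul_nonneg (hf0 i _ (div_pos hp' hq')) hq'.le
  have hA : ∀ i, 0 ≤ ∫ x, g i x ∂μ := fun i => integral_nonneg_of_ae (hgae i)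
  -- integrability of p and q
  have hPint : ∀ i, Integrable (p i) μ := by
    intro i
    by_contra h
    have := hp1 i
    rw [integral_undef h] at this
    norm_num at this
  have hQint : ∀ i, Integrable (q i) μ := by
    intro i
    by_contra h
    have := hq1 i
    rw [integral_undef h] at this
    norm_num at this
  -- Part 2: each D_{f_i} ≤ f_i 1, via the supporting line at 1
  have hB : ∀ i, ∫ x, g i x ∂μ ≤ f i 1 := by
    intro i
    obtain ⟨c, hc⟩ := concave_supporting_line (hf i)
    have hptw : ∀ᵐ x ∂μ, g i x ≤ f i 1 * q i x + c * (p i x - q i x) := by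
      filter_upwards [hpne i, hqne i] with x hpx hqx
      have hq' : 0 < q i x := (hq0 i x).lt_of_ne (Ne.symm hqx)
      have hp' : 0 < p i x := (hp0 i x).lt_of_ne (Ne.symm hpx)
      have ht : p i x / q i x ∈ Set.Ioi (0:ℝ) := div_pos hp' hq'
      have h1 := hc _ ht
      have h2 : f i (p i x / q i x) * q i x
          ≤ (f i 1 + c * (p i x / q i x - 1)) * q i x :=
        mul_le_mul_of_nonneg_right h1 hq'.le
      have h3 : (p i x / q i x) * q i x = p i x := div_mul_cancel₀ _ hqx
      calc g i x ≤ (f i 1 + c * (p i x / q i x - 1)) * q i x := h2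
        _ = f i 1 * q i x + c * ((p i x / q i x) * q i x - q i x) := by ring
        _ = f i 1 * q i x + c * (p i x - q i x) := by rw [h3]
    have hrint : Integrable (fun x => f i 1 * q i x + c * (p i x - q i x)) μ :=
      ((hQint i).const_mul _).add (((hPint i).sub (hQint i)).const_mul c)
    have h1int : Integrable (fun x => f i 1 * q i x) μ := (hQint i).const_mul _
    have h2int : Integrable (fun x => c * (p i x - q i x)) μ :=
      ((hPint i).sub (hQint i)).const_mul c
    calc ∫ x, g i x ∂μ ≤ ∫ x, (f i 1 * q i x + c * (p i x - q i x)) ∂μ :=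
          integral_mono_ae (hint i) hrint hptw
      _ = f i 1 * ∫ x, q i x ∂μ + c * ((∫ x, p i x ∂μ) - ∫ x, q i x ∂μ) := by
          rw [integral_add h1int h2int, integral_const_mul,
            integral_const_mul, integral_sub (hPint i) (hQint i)]
      _ = f i 1 := by rw [hp1 i, hq1 i]; ring
  refine ⟨?_, Finset.prod_le_prod (fun i _ => hA i) (fun i _ => hB i)⟩
  -- Part 1
  rcases Nat.eq_zero_or_pos n with hn | hn
  · subst hn; simp
  have hnne : (n:ℝ) ≠ 0 := Nat.cast_ne_zero.mpr hn.ne'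
  have hwnn : (0:ℝ) ≤ 1/n := by positivity
  -- Hölder in ℝ≥0∞
  have hHolder := ENNReal.lintegral_prod_norm_pow_le (μ := μ) Finset.univ
    (f := fun i x => ENNReal.ofReal (g i x))
    (fun i _ => ((hgmeas i).ennreal_ofReal).aemeasurable)
    (p := fun _ : Fin n => 1/n)
    (by rw [Finset.sum_const, Finset.card_univ, Fintype.card_fin, nsmul_eq_mul, mul_one_div, div_self hnne])
    (fun i _ => hwnn)
  set h : X → ℝ := fun x => ∏ i : Fin n, (g i x) ^ ((1:ℝ)/n) with hhdef
  have hgaeall : ∀ᵐ x ∂μ, ∀ i, 0 ≤ g i x := (ae_all_iff).mpr hgae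
  have hhae : ∀ᵐ x ∂μ, 0 ≤ h x := by
    filter_upwards [hgaeall] with x hx
    exact Finset.prod_nonneg fun i _ => Real.rpow_nonneg (hx i) _
  have hofReal : ∀ᵐ x ∂μ, ENNReal.ofReal (h x)
      = ∏ i : Fin n, (ENNReal.ofReal (g i x)) ^ ((1:ℝ)/n) := by
    filter_upwards [hgaeall] with x hx
    rw [hhdef]
    rw [ENNReal.ofReal_prod_of_nonneg (fun i _ => Real.rpow_nonneg (hx i) _)]
    exact Finset.prod_congr rfl fun i _ =>
      (ENNReal.ofReal_rpow_of_nonneg (hx i) hwnn).symm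
  have hlin : ∀ i, ∫⁻ x, ENNReal.ofReal (g i x) ∂μ = ENNReal.ofReal (∫ x, g i x ∂μ) :=
    fun i => (ofReal_integral_eq_lintegral_ofReal (hint i) (hgae i)).symm
  -- the ENNReal bound
  have key : ∫⁻ x, ENNReal.ofReal (h x) ∂μ
      ≤ ∏ i : Fin n, (ENNReal.ofReal (∫ x, g i x ∂μ)) ^ ((1:ℝ)/n) := by
    rw [lintegral_congr_ae hofReal]
    refine hHolder.trans_eq ?_
    exact Finset.prod_congr rfl fun i _ => by rw [hlin i]
  have hRHSne : (∏ i : Fin n, (ENNReal.ofReal (∫ x, g i x ∂μ)) ^ ((1:ℝ)/n)) ≠ ⊤ := by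
    refine (ENNReal.prod_lt_top ?_).ne
    intro i _
    exact (ENNReal.rpow_ne_top_of_nonneg hwnn ENNReal.ofReal_ne_top).lt_top
  have hreal : ∫ x, h x ∂μ ≤ ∏ i : Fin n, (∫ x, g i x ∂μ) ^ ((1:ℝ)/n) := by
    have htr : (∏ i : Fin n, (ENNReal.ofReal (∫ x, g i x ∂μ)) ^ ((1:ℝ)/n)).toReal
        = ∏ i : Fin n, (∫ x, g i x ∂μ) ^ ((1:ℝ)/n) := by
      rw [ENNReal.toReal_prod]
      exact Finset.prod_congr rfl fun i _ => by
        rw [← ENNReal.toReal_rpow, ENNReal.toReal_ofReal (hA i)]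
    by_cases hInt : Integrable h μ
    · have := ofReal_integral_eq_lintegral_ofReal hInt hhae
      have h2 : ENNReal.ofReal (∫ x, h x ∂μ)
          ≤ ∏ i : Fin n, (ENNReal.ofReal (∫ x, g i x ∂μ)) ^ ((1:ℝ)/n) := by
        rw [this]; exact key
      calc ∫ x, h x ∂μ = (ENNReal.ofReal (∫ x, h x ∂μ)).toReal :=
            (ENNReal.toReal_ofReal (integral_nonneg_of_ae hhae)).symm
        _ ≤ _ := by rw [← htr]; exact ENNReal.toReal_mono hRHSne h2
    · rw [integral_undef hInt, ← htr]
      exact ENNReal.toReal_nonneg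
  have hhnn : 0 ≤ ∫ x, h x ∂μ := integral_nonneg_of_ae hhae
  calc (∫ x, h x ∂μ) ^ n ≤ (∏ i : Fin n, (∫ x, g i x ∂μ) ^ ((1:ℝ)/n)) ^ n :=
        pow_le_pow_left₀ hhnn hreal n
    _ = ∏ i : Fin n, ((∫ x, g i x ∂μ) ^ ((1:ℝ)/n)) ^ n := by
        rw [Finset.prod_pow]
    _ = ∏ i : Fin n, ∫ x, g i x ∂μ := by
        refine Finset.prod_congr rfl fun i _ => ?_
        rw [← Real.rpow_natCast ((∫ x, g i x ∂μ) ^ ((1:ℝ)/n)) n,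
          ← Real.rpow_mul (hA i), one_div, inv_mul_cancel₀ hnne, Real.rpow_one]
end

section
/- Log-convexity in the index of the i-th mixed f-divergence: for real numbers i, j, k with j ≤ i ≤ k (or k ≤ i ≤ j), D_{f⃗}(P⃗,Q⃗; i) ≤ [D_{f⃗}(P⃗,Q⃗; j)]^{(k−i)/(k−j)} · [D_{f⃗}(P⃗,Q⃗; k)]^{(i−j)/(k−j)}. -/
open MeasureTheory

/-- Log-convexity in the index of the i-th mixed f-divergence: for real `j ≤ i ≤ k`
(or `k ≤ i ≤ j`) with `j ≠ k`,
`D_{f⃗}(P⃗,Q⃗; i) ≤ [D_{f⃗}(P⃗,Q⃗; j)]^{(k−i)/(k−j)} · [D_{f⃗}(P⃗,Q⃗; k)]^{(i−j)/(k−j)}`. -/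
theorem ith_mixed_f_divergence_log_convex
    {X : Type*} [MeasurableSpace X] (μ : Measure X) [IsFiniteMeasure μ]
    (n : ℕ) (hn : 0 < n) (f₁ f₂ : ℝ → ℝ) (p₁ p₂ q₁ q₂ : X → ℝ)
    (hfpos : ∀ t ∈ Set.Ioi (0:ℝ), 0 < f₁ t) (hfpos₂ : ∀ t ∈ Set.Ioi (0:ℝ), 0 < f₂ t)
    (hpm₁ : Measurable p₁) (hpm₂ : Measurable p₂)
    (hqm₁ : Measurable q₁) (hqm₂ : Measurable q₂)
    (hp0₁ : ∀ x, 0 ≤ p₁ x) (hp0₂ : ∀ x, 0 ≤ p₂ x)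
    (hq0₁ : ∀ x, 0 ≤ q₁ x) (hq0₂ : ∀ x, 0 ≤ q₂ x)
    (hp1₁ : ∫ x, p₁ x ∂μ = 1) (hp1₂ : ∫ x, p₂ x ∂μ = 1)
    (hq1₁ : ∫ x, q₁ x ∂μ = 1) (hq1₂ : ∫ x, q₂ x ∂μ = 1)
    (hpne₁ : ∀ᵐ x ∂μ, p₁ x ≠ 0) (hpne₂ : ∀ᵐ x ∂μ, p₂ x ≠ 0)
    (hqne₁ : ∀ᵐ x ∂μ, q₁ x ≠ 0) (hqne₂ : ∀ᵐ x ∂μ, q₂ x ≠ 0)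
    (D : ℝ → ℝ)
    (hD : ∀ i : ℝ, D i = ∫ x, (f₁ (p₁ x / q₁ x) * q₁ x) ^ (i / n)
        * (f₂ (p₂ x / q₂ x) * q₂ x) ^ ((n - i) / n) ∂μ)
    (i j k : ℝ) (hjk : j ≠ k)
    (horder : (j ≤ i ∧ i ≤ k) ∨ (k ≤ i ∧ i ≤ j))
    (hintj : Integrable (fun x => (f₁ (p₁ x / q₁ x) * q₁ x) ^ (j / n)
        * (f₂ (p₂ x / q₂ x) * q₂ x) ^ ((n - j) / n)) μ)
    (hintk : Integrable (fun x => (f₁ (p₁ x / q₁ x) * q₁ x) ^ (k / n)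
        * (f₂ (p₂ x / q₂ x) * q₂ x) ^ ((n - k) / n)) μ) :
    D i ≤ (D j) ^ ((k - i) / (k - j)) * (D k) ^ ((i - j) / (k - j)) := by
  have hkj : k - j ≠ 0 := sub_ne_zero.mpr (Ne.symm hjk)
  have hn' : (n : ℝ) ≠ 0 := Nat.cast_ne_zero.mpr hn.ne'
  set g : X → ℝ := fun x => f₁ (p₁ x / q₁ x) * q₁ x with hgdef
  set h : X → ℝ := fun x => f₂ (p₂ x / q₂ x) * q₂ x with hhdef
  have hpos : ∀ᵐ x ∂μ, 0 < g x ∧ 0 < h x := by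
    filter_upwards [hpne₁, hpne₂, hqne₁, hqne₂] with x h1 h2 h3 h4
    have hq1 : 0 < q₁ x := (hq0₁ x).lt_of_ne (Ne.symm h3)
    have hq2 : 0 < q₂ x := (hq0₂ x).lt_of_ne (Ne.symm h4)
    have hp1 : 0 < p₁ x := (hp0₁ x).lt_of_ne (Ne.symm h1)
    have hp2 : 0 < p₂ x := (hp0₂ x).lt_of_ne (Ne.symm h2)
    exact ⟨mul_pos (hfpos _ (Set.mem_Ioi.mpr (div_pos hp1 hq1))) hq1,
      mul_pos (hfpos₂ _ (Set.mem_Ioi.mpr (div_pos hp2 hq2))) hq2⟩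
  rcases eq_or_ne i j with rij | rij
  · rw [rij, div_self hkj, Real.rpow_one, sub_self, zero_div, Real.rpow_zero, mul_one]
  rcases eq_or_ne i k with rik | rik
  · rw [rik, sub_self, zero_div, Real.rpow_zero, one_mul, div_self hkj, Real.rpow_one]
  -- main case
  set θ : ℝ := (i - j) / (k - j) with hθdef
  have hθmem : 0 < θ ∧ θ < 1 := by
    rcases horder with ⟨hji, hik⟩ | ⟨hki, hij⟩
    · have h1 : j < i := hji.lt_of_ne (Ne.symm rij)
      have h2 : i < k := hik.lt_of_ne rik
      refine ⟨div_pos (by linarith) (by linarith), ?_⟩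
      rw [div_lt_one (by linarith)]; linarith
    · have h1 : k < i := hki.lt_of_ne (Ne.symm rik)
      have h2 : i < j := hij.lt_of_ne rij
      have hrw : θ = (j - i) / (j - k) := by
        rw [hθdef, ← neg_div_neg_eq]; ring_nf
      rw [hrw]
      refine ⟨div_pos (by linarith) (by linarith), ?_⟩
      rw [div_lt_one (by linarith)]; linarith
  obtain ⟨hθ0, hθ1⟩ := hθmem
  have h1θ : 0 < 1 - θ := by linarith
  set P : ℝ := 1 / (1 - θ) with hPdef
  set Q : ℝ := 1 / θ with hQdef
  have hP0 : 0 < P := by positivity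
  have hQ0 : 0 < Q := by positivity
  have hPinv : 1 / P = 1 - θ := by rw [hPdef, one_div_one_div]
  have hQinv : 1 / Q = θ := by rw [hQdef, one_div_one_div]
  have hpq : Real.HolderConjugate P Q := by
    refine Real.holderConjugate_iff.mpr ⟨?_, ?_⟩
    · exact one_lt_one_div h1θ (by linarith)
    · rw [hPdef, hQdef]; simp only [one_div, inv_inv]; ring
  set Ij : X → ℝ := fun x => g x ^ (j / (n:ℝ)) * h x ^ (((n:ℝ) - j) / (n:ℝ)) with hIjdef
  set Ik : X → ℝ := fun x => g x ^ (k / (n:ℝ)) * h x ^ (((n:ℝ) - k) / (n:ℝ)) with hIkdef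
  set F : X → ℝ := fun x => Ij x ^ (1 - θ) with hFdef
  set G : X → ℝ := fun x => Ik x ^ θ with hGdef
  have hIjm : AEMeasurable Ij μ := hintj.aestronglyMeasurable.aemeasurable
  have hIkm : AEMeasurable Ik μ := hintk.aestronglyMeasurable.aemeasurable
  have hFm : AEStronglyMeasurable F μ := by
    have : AEMeasurable F μ := by fun_prop
    exact this.aestronglyMeasurable
  have hGm : AEStronglyMeasurable G μ := by
    have : AEMeasurable G μ := by fun_prop
    exact this.aestronglyMeasurable
  have hIjpos : ∀ x, 0 < g x → 0 < h x → 0 < Ij x := fun x hg hh =>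
    mul_pos (Real.rpow_pos_of_pos hg _) (Real.rpow_pos_of_pos hh _)
  have hIkpos : ∀ x, 0 < g x → 0 < h x → 0 < Ik x := fun x hg hh =>
    mul_pos (Real.rpow_pos_of_pos hg _) (Real.rpow_pos_of_pos hh _)
  -- the rpow cancellation identities
  have hFP_eq : ∀ x, 0 < Ij x → F x ^ P = Ij x := by
    intro x hx
    rw [hFdef, ← Real.rpow_mul hx.le, mul_one_div_cancel h1θ.ne', Real.rpow_one]
  have hGQ_eq : ∀ x, 0 < Ik x → G x ^ Q = Ik x := by
    intro x hx
    rw [hGdef, ← Real.rpow_mul hx.le, mul_one_div_cancel hθ0.ne', Real.rpow_one]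
  -- a.e. nonnegativity
  have hFnn : 0 ≤ᵐ[μ] F := by
    filter_upwards [hpos] with x ⟨hg, hh⟩
    exact (Real.rpow_pos_of_pos (hIjpos x hg hh) _).le
  have hGnn : 0 ≤ᵐ[μ] G := by
    filter_upwards [hpos] with x ⟨hg, hh⟩
    exact (Real.rpow_pos_of_pos (hIkpos x hg hh) _).le
  -- integrability of ‖F‖ ^ P and ‖G‖ ^ Q
  have hFPint : Integrable (fun x => ‖F x‖ ^ P) μ := by
    refine hintj.congr ?_
    filter_upwards [hpos] with x ⟨hg, hh⟩
    have hx := hIjpos x hg hh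
    rw [Real.norm_of_nonneg (Real.rpow_pos_of_pos hx _).le, hFP_eq x hx]
  have hGQint : Integrable (fun x => ‖G x‖ ^ Q) μ := by
    refine hintk.congr ?_
    filter_upwards [hpos] with x ⟨hg, hh⟩
    have hx := hIkpos x hg hh
    rw [Real.norm_of_nonneg (Real.rpow_pos_of_pos hx _).le, hGQ_eq x hx]
  -- Memℒp statements
  have hFmem : MemLp F (ENNReal.ofReal P) μ := by
    have hPne : ENNReal.ofReal P ≠ 0 := (ENNReal.ofReal_pos.mpr hP0).ne'
    refine (memLp_norm_rpow_iff hFm hPne ENNReal.ofReal_ne_top).mp ?_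
    rw [ENNReal.toReal_ofReal hP0.le, ENNReal.div_self hPne ENNReal.ofReal_ne_top,
      memLp_one_iff_integrable]
    exact hFPint
  have hGmem : MemLp G (ENNReal.ofReal Q) μ := by
    have hQne : ENNReal.ofReal Q ≠ 0 := (ENNReal.ofReal_pos.mpr hQ0).ne'
    refine (memLp_norm_rpow_iff hGm hQne ENNReal.ofReal_ne_top).mp ?_
    rw [ENNReal.toReal_ofReal hQ0.le, ENNReal.div_self hQne ENNReal.ofReal_ne_top,
      memLp_one_iff_integrable]
    exact hGQint
  -- Hölder
  have H := integral_mul_le_Lp_mul_Lq_of_nonneg hpq hFnn hGnn hFmem hGmem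
  -- rewrite the three integrals
  have hlhs : ∫ x, F x * G x ∂μ = D i := by
    rw [hD i]
    refine integral_congr_ae ?_
    filter_upwards [hpos] with x ⟨hg, hh⟩
    rw [hFdef, hGdef, hIjdef, hIkdef]
    simp only
    rw [Real.mul_rpow (Real.rpow_pos_of_pos hg _).le (Real.rpow_pos_of_pos hh _).le,
      Real.mul_rpow (Real.rpow_pos_of_pos hg _).le (Real.rpow_pos_of_pos hh _).le,
      ← Real.rpow_mul hg.le, ← Real.rpow_mul hh.le, ← Real.rpow_mul hg.le,
      ← Real.rpow_mul hh.le, mul_mul_mul_comm, ← Real.rpow_add hg, ← Real.rpow_add hh]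
    have e1 : j / (n:ℝ) * (1 - θ) + k / (n:ℝ) * θ = i / (n:ℝ) := by
      rw [hθdef]; field_simp; ring
    have e2 : ((n:ℝ) - j) / (n:ℝ) * (1 - θ) + ((n:ℝ) - k) / (n:ℝ) * θ
        = ((n:ℝ) - i) / (n:ℝ) := by
      rw [hθdef]; field_simp; ring
    rw [e1, e2]
  have hrhsj : ∫ x, F x ^ P ∂μ = D j := by
    rw [hD j]
    refine integral_congr_ae ?_
    filter_upwards [hpos] with x ⟨hg, hh⟩
    exact hFP_eq x (hIjpos x hg hh)
  have hrhsk : ∫ x, G x ^ Q ∂μ = D k := by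
    rw [hD k]
    refine integral_congr_ae ?_
    filter_upwards [hpos] with x ⟨hg, hh⟩
    exact hGQ_eq x (hIkpos x hg hh)
  rw [hlhs, hrhsj, hrhsk, hPinv, hQinv] at H
  have hθ' : θ = (i - j) / (k - j) := hθdef
  have h1θ' : 1 - θ = (k - i) / (k - j) := by rw [hθdef]; field_simp; ring
  rw [← h1θ']
  exact H
end

section
/- If f_1: (0,∞) → (0,∞) is concave and f_2: (0,∞) → (0,∞) is convex, then for all real k ≤ 0, [D_{f⃗}(P⃗,Q⃗; k)]^n ≥ [f_1(1)]^k · [f_2(1)]^{n−k}. -/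
open MeasureTheory

private lemma tangent_convex_aux {f : ℝ → ℝ} (hf : ConvexOn ℝ (Set.Ioi 0) f) :
    ∃ c : ℝ, ∀ t ∈ Set.Ioi (0:ℝ), f 1 + c * (t - 1) ≤ f t := by
  have h1 : (1:ℝ) ∈ Set.Ioi (0:ℝ) := by norm_num
  set g : ℝ → ℝ := fun t => (f t - f 1) / (t - 1) with hg
  have hmono : ∀ x ∈ Set.Ioi (0:ℝ), ∀ y ∈ Set.Ioi (0:ℝ), x ≠ 1 → y ≠ 1 → x ≤ y → g x ≤ g y :=
    fun x hx y hy hx1 hy1 hxy => hf.secant_mono h1 hx hy hx1 hy1 hxy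
  set S := g '' Set.Ioo (0:ℝ) 1 with hS
  have hne : S.Nonempty := ⟨g (1/2), ⟨1/2, by norm_num, rfl⟩⟩
  have hbdd : ∀ y ∈ S, y ≤ g 2 := by
    rintro _ ⟨t, ht, rfl⟩
    exact hmono t (Set.mem_Ioi.2 ht.1) 2 (by norm_num) (ne_of_lt ht.2) (by norm_num)
      (by linarith [ht.2])
  refine ⟨sSup S, fun t ht => ?_⟩
  rcases lt_trichotomy t 1 with h | h | h
  · have hts : g t ≤ sSup S := le_csSup ⟨g 2, hbdd⟩ ⟨t, ⟨ht, h⟩, rfl⟩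
    have ht1 : t - 1 < 0 := by linarith
    rw [hg] at hts
    have := (div_le_iff_of_neg ht1).1 hts
    linarith
  · simp [h]
  · have hst : sSup S ≤ g t := csSup_le hne (by
      rintro _ ⟨s, hs, rfl⟩
      exact hmono s (Set.mem_Ioi.2 hs.1) t ht (ne_of_lt hs.2) (ne_of_gt h) (by linarith [hs.2]))
    have ht1 : (0:ℝ) < t - 1 := by linarith
    rw [hg] at hst
    have := (le_div_iff₀ ht1).1 hst
    linarith

private lemma tangent_concave_aux {f : ℝ → ℝ} (hf : ConcaveOn ℝ (Set.Ioi 0) f) :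
    ∃ c : ℝ, ∀ t ∈ Set.Ioi (0:ℝ), f t ≤ f 1 + c * (t - 1) := by
  obtain ⟨c, hc⟩ := tangent_convex_aux hf.neg
  refine ⟨-c, fun t ht => ?_⟩
  have := hc t ht
  simp only [Pi.neg_apply] at this
  linarith

private lemma bern_nonpos {t α : ℝ} (ht : 0 < t) (hα : α ≤ 0) : 1 + α * (t - 1) ≤ t ^ α := by
  rcases eq_or_lt_of_le hα with rfl | hα'
  · simp
  · have h1α : (0:ℝ) < 1 - α := by linarith
    have key := Real.geom_mean_le_arith_mean2_weighted
      (by positivity : (0:ℝ) ≤ 1/(1-α)) (div_nonneg (by linarith) h1α.le : (0:ℝ) ≤ (-α)/(1-α))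
      (Real.rpow_nonneg ht.le α) ht.le
      (by field_simp; ring : 1/(1-α) + (-α)/(1-α) = 1)
    have e1 : (t ^ α) ^ (1/(1-α)) * t ^ ((-α)/(1-α)) = 1 := by
      rw [← Real.rpow_mul ht.le, ← Real.rpow_add ht]
      rw [show α * (1/(1-α)) + (-α)/(1-α) = 0 by field_simp; ring]
      exact Real.rpow_zero t
    rw [e1] at key
    have key2 := mul_le_mul_of_nonneg_left key h1α.le
    rw [mul_one, mul_add] at key2
    have e2 : (1-α) * (1/(1-α) * t ^ α) = t ^ α := by field_simp
    have e3 : (1-α) * ((-α)/(1-α) * t) = -α * t := by field_simp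
    rw [e2, e3] at key2
    linarith

/-- If `f₁ : (0,∞) → (0,∞)` is concave and `f₂ : (0,∞) → (0,∞)` is convex, then for
all real `k ≤ 0`, `[D_{f⃗}(P⃗,Q⃗; k)]^n ≥ [f₁(1)]^k · [f₂(1)]^{n−k}`. -/
theorem ith_mixed_f_divergence_ge_concave_convex
    {X : Type*} [MeasurableSpace X] (μ : Measure X) [IsFiniteMeasure μ]
    (n : ℕ) (hn : 0 < n) (f₁ f₂ : ℝ → ℝ) (p₁ p₂ q₁ q₂ : X → ℝ)
    (hfpos₁ : ∀ t ∈ Set.Ioi (0:ℝ), 0 < f₁ t) (hfpos₂ : ∀ t ∈ Set.Ioi (0:ℝ), 0 < f₂ t)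
    (hf₁ : ConcaveOn ℝ (Set.Ioi (0:ℝ)) f₁) (hf₂ : ConvexOn ℝ (Set.Ioi (0:ℝ)) f₂)
    (hpm₁ : Measurable p₁) (hpm₂ : Measurable p₂)
    (hqm₁ : Measurable q₁) (hqm₂ : Measurable q₂)
    (hp0₁ : ∀ x, 0 ≤ p₁ x) (hp0₂ : ∀ x, 0 ≤ p₂ x)
    (hq0₁ : ∀ x, 0 ≤ q₁ x) (hq0₂ : ∀ x, 0 ≤ q₂ x)
    (hp1₁ : ∫ x, p₁ x ∂μ = 1) (hp1₂ : ∫ x, p₂ x ∂μ = 1)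
    (hq1₁ : ∫ x, q₁ x ∂μ = 1) (hq1₂ : ∫ x, q₂ x ∂μ = 1)
    (hpne₁ : ∀ᵐ x ∂μ, p₁ x ≠ 0) (hpne₂ : ∀ᵐ x ∂μ, p₂ x ≠ 0)
    (hqne₁ : ∀ᵐ x ∂μ, q₁ x ≠ 0) (hqne₂ : ∀ᵐ x ∂μ, q₂ x ≠ 0)
    (hint₁ : Integrable (fun x => f₁ (p₁ x / q₁ x) * q₁ x) μ)
    (hint₂ : Integrable (fun x => f₂ (p₂ x / q₂ x) * q₂ x) μ)
    (k : ℝ) (hk : k ≤ 0)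
    (hintk : Integrable (fun x => (f₁ (p₁ x / q₁ x) * q₁ x) ^ (k / n)
        * (f₂ (p₂ x / q₂ x) * q₂ x) ^ ((n - k) / n)) μ) :
    (f₁ 1) ^ k * (f₂ 1) ^ ((n : ℝ) - k)
      ≤ (∫ x, (f₁ (p₁ x / q₁ x) * q₁ x) ^ (k / n)
        * (f₂ (p₂ x / q₂ x) * q₂ x) ^ ((n - k) / n) ∂μ) ^ (n : ℝ) := by
  have hn' : (0:ℝ) < n := Nat.cast_pos.2 hn
  set α : ℝ := k / n with hα_def
  set β : ℝ := ((n:ℝ) - k) / n with hβ_def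
  have hα : α ≤ 0 := div_nonpos_of_nonpos_of_nonneg hk hn'.le
  have hβ : β = 1 - α := by rw [hβ_def, hα_def]; field_simp
  have hβ0 : 0 ≤ β := by rw [hβ]; linarith
  -- a.e. positivity
  have hp₁pos : ∀ᵐ x ∂μ, 0 < p₁ x := hpne₁.mono fun x h => (hp0₁ x).lt_of_ne (Ne.symm h)
  have hp₂pos : ∀ᵐ x ∂μ, 0 < p₂ x := hpne₂.mono fun x h => (hp0₂ x).lt_of_ne (Ne.symm h)
  have hq₁pos : ∀ᵐ x ∂μ, 0 < q₁ x := hqne₁.mono fun x h => (hq0₁ x).lt_of_ne (Ne.symm h)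
  have hq₂pos : ∀ᵐ x ∂μ, 0 < q₂ x := hqne₂.mono fun x h => (hq0₂ x).lt_of_ne (Ne.symm h)
  have hapos : ∀ᵐ x ∂μ, 0 < f₁ (p₁ x / q₁ x) * q₁ x := by
    filter_upwards [hp₁pos, hq₁pos] with x hp hq
    exact mul_pos (hfpos₁ _ (Set.mem_Ioi.2 (div_pos hp hq))) hq
  have hbpos : ∀ᵐ x ∂μ, 0 < f₂ (p₂ x / q₂ x) * q₂ x := by
    filter_upwards [hp₂pos, hq₂pos] with x hp hq
    exact mul_pos (hfpos₂ _ (Set.mem_Ioi.2 (div_pos hp hq))) hq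
  -- integrability of densities
  have hip₁ : Integrable p₁ μ := by
    by_contra h; rw [integral_undef h] at hp1₁; exact one_ne_zero hp1₁.symm
  have hiq₁ : Integrable q₁ μ := by
    by_contra h; rw [integral_undef h] at hq1₁; exact one_ne_zero hq1₁.symm
  have hip₂ : Integrable p₂ μ := by
    by_contra h; rw [integral_undef h] at hp1₂; exact one_ne_zero hp1₂.symm
  have hiq₂ : Integrable q₂ μ := by
    by_contra h; rw [integral_undef h] at hq1₂; exact one_ne_zero hq1₂.symm
  set A : ℝ := ∫ x, f₁ (p₁ x / q₁ x) * q₁ x ∂μ with hA_def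
  set B : ℝ := ∫ x, f₂ (p₂ x / q₂ x) * q₂ x ∂μ with hB_def
  -- A ≤ f₁ 1
  obtain ⟨c₁, hc₁⟩ := tangent_concave_aux hf₁
  have hA_le : A ≤ f₁ 1 := by
    have hle : ∀ᵐ x ∂μ, f₁ (p₁ x / q₁ x) * q₁ x ≤ f₁ 1 * q₁ x + c₁ * (p₁ x - q₁ x) := by
      filter_upwards [hp₁pos, hq₁pos] with x hp hq
      have h2 := mul_le_mul_of_nonneg_right
        (hc₁ _ (Set.mem_Ioi.2 (div_pos hp hq))) hq.le
      have e : (f₁ 1 + c₁ * (p₁ x / q₁ x - 1)) * q₁ x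
          = f₁ 1 * q₁ x + c₁ * (p₁ x - q₁ x) := by field_simp
      linarith [h2, e.le, e.ge]
    have ha1 : Integrable (fun x => f₁ 1 * q₁ x) μ := hiq₁.const_mul _
    have ha2 : Integrable (fun x => c₁ * (p₁ x - q₁ x)) μ := by
      exact (hip₁.sub hiq₁).const_mul _
    have heq : ∫ x, f₁ 1 * q₁ x + c₁ * (p₁ x - q₁ x) ∂μ = f₁ 1 := by
      rw [integral_add ha1 ha2, integral_const_mul, integral_const_mul,
        integral_sub hip₁ hiq₁, hp1₁, hq1₁]
      ring
    have ha12 : Integrable (fun x => f₁ 1 * q₁ x + c₁ * (p₁ x - q₁ x)) μ := ha1.add ha2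
    have hmono := integral_mono_ae hint₁ ha12 hle
    rw [heq] at hmono
    exact hmono
  -- f₂ 1 ≤ B
  obtain ⟨c₂, hc₂⟩ := tangent_convex_aux hf₂
  have hB_ge : f₂ 1 ≤ B := by
    have hle : ∀ᵐ x ∂μ, f₂ 1 * q₂ x + c₂ * (p₂ x - q₂ x) ≤ f₂ (p₂ x / q₂ x) * q₂ x := by
      filter_upwards [hp₂pos, hq₂pos] with x hp hq
      have h2 := mul_le_mul_of_nonneg_right
        (hc₂ _ (Set.mem_Ioi.2 (div_pos hp hq))) hq.le
      have e : (f₂ 1 + c₂ * (p₂ x / q₂ x - 1)) * q₂ x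
          = f₂ 1 * q₂ x + c₂ * (p₂ x - q₂ x) := by field_simp
      linarith [h2, e.le, e.ge]
    have hb1 : Integrable (fun x => f₂ 1 * q₂ x) μ := hiq₂.const_mul _
    have hb2 : Integrable (fun x => c₂ * (p₂ x - q₂ x)) μ := by
      exact (hip₂.sub hiq₂).const_mul _
    have heq : ∫ x, f₂ 1 * q₂ x + c₂ * (p₂ x - q₂ x) ∂μ = f₂ 1 := by
      rw [integral_add hb1 hb2, integral_const_mul, integral_const_mul,
        integral_sub hip₂ hiq₂, hp1₂, hq1₂]
      ring
    have hb12 : Integrable (fun x => f₂ 1 * q₂ x + c₂ * (p₂ x - q₂ x)) μ := hb1.add hb2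
    have hmono := integral_mono_ae hb12 hint₂ hle
    rw [heq] at hmono
    exact hmono
  -- A > 0
  have hμ : μ ≠ 0 := by
    intro h; rw [h] at hp1₁; simp at hp1₁
  have hA_pos : 0 < A := by
    rw [hA_def, integral_pos_iff_support_of_nonneg_ae (hapos.mono fun x h => h.le) hint₁]
    have hcompl : μ (Function.support (fun x => f₁ (p₁ x / q₁ x) * q₁ x))ᶜ = 0 := by
      have h0 : ∀ᵐ x ∂μ, f₁ (p₁ x / q₁ x) * q₁ x ≠ 0 := hapos.mono fun x h => h.ne'
      rw [ae_iff] at h0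
      have hset : (Function.support (fun x => f₁ (p₁ x / q₁ x) * q₁ x))ᶜ
          = {a | ¬ f₁ (p₁ a / q₁ a) * q₁ a ≠ 0} := by
        ext x
        simp only [Function.mem_support, Set.mem_compl_iff, Set.mem_setOf_eq]
      rw [hset]
      exact h0
    by_contra h
    push_neg at h
    have h' : μ (Function.support (fun x => f₁ (p₁ x / q₁ x) * q₁ x)) = 0 :=
      le_antisymm h zero_le
    have huniv : μ Set.univ = 0 := by
      have hle2 := measure_union_le (μ := μ)
        (Function.support (fun x => f₁ (p₁ x / q₁ x) * q₁ x))
        (Function.support (fun x => f₁ (p₁ x / q₁ x) * q₁ x))ᶜ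
      rw [Set.union_compl_self, h', hcompl, add_zero] at hle2
      exact le_antisymm hle2 zero_le
    exact (Measure.measure_univ_ne_zero.2 hμ) huniv
  have hB_pos : 0 < B := lt_of_lt_of_le (hfpos₂ 1 (by norm_num)) hB_ge
  have hf₁1 : 0 < f₁ 1 := hfpos₁ 1 (by norm_num)
  have hf₂1 : 0 < f₂ 1 := hfpos₂ 1 (by norm_num)
  -- reverse Hölder via Bernoulli
  set F : X → ℝ := fun x => (f₁ (p₁ x / q₁ x) * q₁ x) ^ α * (f₂ (p₂ x / q₂ x) * q₂ x) ^ β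
    with hF_def
  have hABpos : 0 < A ^ α * B ^ β :=
    mul_pos (Real.rpow_pos_of_pos hA_pos _) (Real.rpow_pos_of_pos hB_pos _)
  have hpt : ∀ᵐ x ∂μ, α * ((f₁ (p₁ x / q₁ x) * q₁ x) / A) + β * ((f₂ (p₂ x / q₂ x) * q₂ x) / B)
      ≤ F x / (A ^ α * B ^ β) := by
    filter_upwards [hapos, hbpos] with x ha hb
    set u : ℝ := (f₁ (p₁ x / q₁ x) * q₁ x) / A with hu_def
    set v : ℝ := (f₂ (p₂ x / q₂ x) * q₂ x) / B with hv_def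
    have hu : 0 < u := div_pos ha hA_pos
    have hv : 0 < v := div_pos hb hB_pos
    have hbern := bern_nonpos (div_pos hu hv) hα
    have h2 := mul_le_mul_of_nonneg_left hbern hv.le
    have e1 : v * (u / v) ^ α = u ^ α * v ^ β := by
      rw [Real.div_rpow hu.le hv.le, hβ, Real.rpow_sub hv, Real.rpow_one]
      field_simp
    have e2 : u ^ α * v ^ β = F x / (A ^ α * B ^ β) := by
      rw [hu_def, hv_def, Real.div_rpow (le_of_lt ha) hA_pos.le,
        Real.div_rpow (le_of_lt hb) hB_pos.le, hF_def]
      field_simp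
    have e3 : v * (1 + α * (u / v - 1)) = α * u + β * v := by
      rw [hβ]; field_simp; ring
    calc α * u + β * v = v * (1 + α * (u / v - 1)) := e3.symm
      _ ≤ v * (u / v) ^ α := h2
      _ = u ^ α * v ^ β := e1
      _ = F x / (A ^ α * B ^ β) := e2
  have hIl : Integrable (fun x => α * ((f₁ (p₁ x / q₁ x) * q₁ x) / A)
      + β * ((f₂ (p₂ x / q₂ x) * q₂ x) / B)) μ :=
    ((hint₁.div_const A).const_mul α).add ((hint₂.div_const B).const_mul β)
  have hIr : Integrable (fun x => F x / (A ^ α * B ^ β)) μ := hintk.div_const _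
  have hmain := integral_mono_ae hIl hIr hpt
  rw [integral_add ((hint₁.div_const A).const_mul α) ((hint₂.div_const B).const_mul β),
    integral_const_mul, integral_const_mul, integral_div, integral_div, integral_div,
    ← hA_def, ← hB_def, div_self hA_pos.ne', div_self hB_pos.ne', mul_one, mul_one] at hmain
  have hαβ1 : α + β = 1 := by rw [hβ]; ring
  rw [hαβ1] at hmain
  have hAB_le : A ^ α * B ^ β ≤ ∫ x, F x ∂μ := (one_le_div hABpos).1 hmain
  -- combine with A ≤ f₁ 1 and f₂ 1 ≤ B
  have h1 : (f₁ 1) ^ α * (f₂ 1) ^ β ≤ A ^ α * B ^ β :=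
    mul_le_mul (Real.rpow_le_rpow_of_nonpos hA_pos hA_le hα)
      (Real.rpow_le_rpow hf₂1.le hB_ge hβ0)
      (Real.rpow_nonneg hf₂1.le _) (Real.rpow_nonneg hA_pos.le _)
  have hfinal : (f₁ 1) ^ α * (f₂ 1) ^ β ≤ ∫ x, F x ∂μ := h1.trans hAB_le
  have hpow := Real.rpow_le_rpow (by positivity) hfinal (Nat.cast_nonneg n)
  have hL : ((f₁ 1) ^ α * (f₂ 1) ^ β) ^ (n:ℝ) = (f₁ 1) ^ k * (f₂ 1) ^ ((n:ℝ) - k) := by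
    rw [Real.mul_rpow (Real.rpow_nonneg hf₁1.le _) (Real.rpow_nonneg hf₂1.le _),
      ← Real.rpow_mul hf₁1.le, ← Real.rpow_mul hf₂1.le, hα_def, hβ_def,
      div_mul_cancel₀ _ hn'.ne', div_mul_cancel₀ _ hn'.ne']
  rw [hL] at hpow
  exact hpow
end
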